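/- arXiv:0708.4211 — 2 statements merged into one kernel-verified Lean document; each statement's English description precedes it below -/
import Mathlib

section
/- Let k and l be integers with 4 < k < l ≤ k²/4. Then the cubic polynomial P(λ) = −λ³ + kλ² − lλ + 1 has three real roots λ, μ, ν satisfying 0 < λ < μ < ν, λ < 1 < ν, λμ < 1 < μν, and λν ≠ 1. -/
/-!
Since `P 0 = 1`, `P 1 = k - l`, `P (k / 2) = 1 + k (k² - 4l) / 8` and `P k = 1 - k l`, the
hypotheses make `P` change sign on `(0, 1)`, `(1, k/2)` and `(k/2, k)`, which gives three
distinct real roots `λ < 1 < μ < ν`. Vieta's formula `λ μ ν = 1` (the value at `0`) then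
yields `λ μ = 1/ν < 1`, `μ ν = 1/λ > 1`, and `λ ν = 1/μ ≠ 1`.
-/

theorem cubic_eq_mul_of_isRoot {R : Type*} [CommRing R] [IsDomain R] {p q r a b c : R}
    (hab : a ≠ b) (hbc : b ≠ c) (hac : a ≠ c)
    (ha : a ^ 3 + p * a ^ 2 + q * a + r = 0) (hb : b ^ 3 + p * b ^ 2 + q * b + r = 0)
    (hc : c ^ 3 + p * c ^ 2 + q * c + r = 0) (x : R) :
    x ^ 3 + p * x ^ 2 + q * x + r = (x - a) * (x - b) * (x - c) := by
  -- divided differences of the cubic at `a, b` and at `b, c`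
  have hab' : a ^ 2 + a * b + b ^ 2 + p * (a + b) + q = 0 := by
    refine (mul_eq_zero.1 ?_).resolve_left (sub_ne_zero.2 hab)
    linear_combination ha - hb
  have hbc' : b ^ 2 + b * c + c ^ 2 + p * (b + c) + q = 0 := by
    refine (mul_eq_zero.1 ?_).resolve_left (sub_ne_zero.2 hbc)
    linear_combination hb - hc
  have hp : p = -(a + b + c) := by
    have : (a - c) * (a + b + c + p) = 0 := by linear_combination hab' - hbc'
    linear_combination (mul_eq_zero.1 this).resolve_left (sub_ne_zero.2 hac)
  have hq : q = a * b + b * c + c * a := by linear_combination hab' - (a + b) * hp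
  have hr : r = -(a * b * c) := by linear_combination ha - a ^ 2 * hp - a * hq
  rw [hp, hq, hr]
  ring

section Cubic

variable {k l : ℝ}

def cubic (k l x : ℝ) : ℝ := -x ^ 3 + k * x ^ 2 - l * x + 1

theorem continuous_cubic : Continuous (cubic k l) := by
  unfold cubic
  fun_prop

theorem cubic_zero : cubic k l 0 = 1 := by
  simp [cubic]

theorem cubic_one_neg (hkl : k < l) : cubic k l 1 < 0 := by
  unfold cubic
  linarith

theorem cubic_half_pos (hk : 0 < k) (hl : 4 * l ≤ k ^ 2) : 0 < cubic k l (k / 2) := by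
  have : cubic k l (k / 2) = 1 + k * (k ^ 2 - 4 * l) / 8 := by
    unfold cubic
    ring
  rw [this]
  have : 0 ≤ k * (k ^ 2 - 4 * l) := mul_nonneg hk.le (by linarith)
  linarith

theorem cubic_self_neg (hkl : 1 < k * l) : cubic k l k < 0 := by
  unfold cubic
  linarith

theorem exists_three_roots_cubic (hk : 2 < k) (hkl : k < l) (hl : 4 * l ≤ k ^ 2) :
    ∃ a ∈ Set.Ioo 0 1, ∃ b ∈ Set.Ioo 1 (k / 2), ∃ c ∈ Set.Ioo (k / 2) k,
      cubic k l a = 0 ∧ cubic k l b = 0 ∧ cubic k l c = 0 := by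
  have hP0 := cubic_zero (k := k) (l := l)
  have hP1 := cubic_one_neg hkl
  have hPhalf := cubic_half_pos (by linarith) hl
  have hPk := cubic_self_neg (by nlinarith : 1 < k * l)
  obtain ⟨a, ha, hPa⟩ := intermediate_value_Ioo' zero_le_one continuous_cubic.continuousOn
    (show (0 : ℝ) ∈ Set.Ioo _ _ from ⟨hP1, hP0 ▸ one_pos⟩)
  obtain ⟨b, hb, hPb⟩ := intermediate_value_Ioo (by linarith : (1 : ℝ) ≤ k / 2)
    continuous_cubic.continuousOn (show (0 : ℝ) ∈ Set.Ioo _ _ from ⟨hP1, hPhalf⟩)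
  obtain ⟨c, hc, hPc⟩ := intermediate_value_Ioo' (by linarith : k / 2 ≤ k)
    continuous_cubic.continuousOn (show (0 : ℝ) ∈ Set.Ioo _ _ from ⟨hPk, hPhalf⟩)
  exact ⟨a, ha, b, hb, c, hc, hPa, hPb, hPc⟩

end Cubic

theorem mul_lt_one_and_one_lt_mul_of_mul_mul_eq_one {a b c : ℝ} (ha : 0 < a) (ha1 : a < 1)
    (hb : 1 < b) (hbc : b < c) (habc : a * b * c = 1) :
    a * b < 1 ∧ 1 < b * c ∧ a * c ≠ 1 := by
  have hc : 1 < c := hb.trans hbc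
  refine ⟨?_, ?_, fun hac => hb.ne' ?_⟩
  · nlinarith [mul_pos ha (zero_lt_one.trans hb)]
  · nlinarith [mul_pos (zero_lt_one.trans hb) (zero_lt_one.trans hc)]
  · linear_combination habc - b * hac

/-- For integers `k, l` with `4 < k < l ≤ k²/4`, the polynomial
`P(λ) = -λ³ + kλ² - lλ + 1` has three real roots `λ < μ < ν` with the stated
inequalities (the factorization expresses that λ, μ, ν are precisely its roots). -/
theorem stmt_0 (k l : ℤ) (hk : 4 < k) (hkl : k < l) (hl : 4 * l ≤ k ^ 2) :
    ∃ lam mu nu : ℝ,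
      (∀ x : ℝ, -x ^ 3 + (k : ℝ) * x ^ 2 - (l : ℝ) * x + 1
          = -((x - lam) * (x - mu) * (x - nu))) ∧
      0 < lam ∧ lam < mu ∧ mu < nu ∧ lam < 1 ∧ 1 < nu ∧
      lam * mu < 1 ∧ 1 < mu * nu ∧ lam * nu ≠ 1 := by
  obtain ⟨a, ⟨ha0, ha1⟩, b, ⟨hb1, hbk⟩, c, ⟨hkc, hck⟩, hPa, hPb, hPc⟩ :=
    exists_three_roots_cubic (k := k) (l := l) (by exact_mod_cast (by omega : 2 < k))
      (by exact_mod_cast hkl) (by exact_mod_cast hl)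
  have hab : a < b := ha1.trans hb1
  have hbc : b < c := hbk.trans hkc
  have hfactor (x : ℝ) : -x ^ 3 + (k : ℝ) * x ^ 2 - (l : ℝ) * x + 1
      = -((x - a) * (x - b) * (x - c)) := by
    have root (y : ℝ) (hy : cubic k l y = 0) : y ^ 3 + -k * y ^ 2 + l * y + -1 = 0 := by
      unfold cubic at hy
      linear_combination -hy
    rw [← cubic_eq_mul_of_isRoot hab.ne hbc.ne (hab.trans hbc).ne (root a hPa) (root b hPb)
      (root c hPc)]
    ring
  have habc : a * b * c = 1 := by linear_combination -(hfactor 0)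
  obtain ⟨hab1, hbc1, hac1⟩ := mul_lt_one_and_one_lt_mul_of_mul_mul_eq_one ha0 ha1 hb1 hbc habc
  exact ⟨a, b, c, hfactor, ha0, hab, hbc, ha1, hb1.trans hbc, hab1, hbc1, hac1⟩
end

section
/- Let V be a finite-dimensional real vector space with a pseudo-Euclidean inner product ⟨·,·⟩, f : ℝ → ℝ smooth and periodic of period p > 0, and A : V → V a self-adjoint linear operator. Let 𝓔 be the space of smooth solutions u : ℝ → V of ü(t) = f(t)u(t) + Au(t), and let G = ℤ × ℝ × 𝓔. Then there is a group structure on G (with the evident composition law) such that the formula (k,q,u)·(t,s,v) = (t + kp, s + q − ⟨u̇(t), 2v + u(t)⟩, v + u(t)) defines a left group action of G on ℝ² × V. -/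
set_option linter.unusedSectionVars false
set_option maxHeartbeats 1000000

namespace Stmt11


variable {V : Type} [NormedAddCommGroup V] [NormedSpace ℝ V] [FiniteDimensional ℝ V]

abbrev Sol (A : V →ₗ[ℝ] V) (f : ℝ → ℝ) (u : ℝ → V) : Prop :=
  ContDiff ℝ (⊤ : ℕ∞) u ∧ ∀ t, deriv (deriv u) t = f t • u t + A (u t)

abbrev E (A : V →ₗ[ℝ] V) (f : ℝ → ℝ) := {u : ℝ → V // Sol A f u}

abbrev G (A : V →ₗ[ℝ] V) (f : ℝ → ℝ) := ℤ × ℝ × E A f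

variable {A : V →ₗ[ℝ] V} {f : ℝ → ℝ} {p : ℝ}

lemma sol_diff {u : ℝ → V} (hu : Sol A f u) :
    Differentiable ℝ u ∧ Differentiable ℝ (deriv u) := by
  obtain ⟨h1, h2⟩ := contDiff_infty_iff_deriv.mp (hu.1.of_le (by simp))
  exact ⟨h1, h2.differentiable (by simp)⟩

lemma deriv_shift (u : ℝ → V) (c t : ℝ) :
    deriv (fun s => u (s + c)) t = deriv u (t + c) := deriv_comp_add_const u c t

lemma sol_shift (hfp : Function.Periodic f p) {u : ℝ → V} (hu : Sol A f u) (k : ℤ) :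
    Sol A f (fun t => u (t + (k : ℝ) * p)) := by
  constructor
  · exact hu.1.comp (contDiff_id.add contDiff_const)
  · intro t
    have e1 : deriv (fun s => u (s + (k : ℝ) * p)) = fun s => deriv u (s + (k : ℝ) * p) :=
      funext fun s => deriv_shift u _ s
    rw [e1, deriv_shift, hu.2, (hfp.int_mul k) t]

lemma sol_add {u v : ℝ → V} (hu : Sol A f u) (hv : Sol A f v) :
    Sol A f (fun t => u t + v t) := by
  refine ⟨hu.1.add hv.1, fun t => ?_⟩
  have e1 : deriv (fun t => u t + v t) = fun t => deriv u t + deriv v t :=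
    funext fun s => deriv_add ((sol_diff hu).1 s) ((sol_diff hv).1 s)
  rw [e1, deriv_fun_add ((sol_diff hu).2 t) ((sol_diff hv).2 t), hu.2, hv.2]
  simp [smul_add]; abel

lemma sol_neg {u : ℝ → V} (hu : Sol A f u) : Sol A f (fun t => -u t) := by
  refine ⟨hu.1.neg, fun t => ?_⟩
  have e1 : deriv (fun t => -u t) = fun t => -deriv u t := funext fun s => deriv.neg
  rw [e1]
  have e2 : deriv (fun t => -deriv u t) t = -deriv (deriv u) t := deriv.neg
  rw [e2, hu.2]
  simp; abel

lemma sol_zero : Sol A f (fun _ => (0 : V)) := by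
  refine ⟨contDiff_const, fun t => ?_⟩
  simp [deriv_const']

noncomputable def bc (B : LinearMap.BilinForm ℝ V) : V →L[ℝ] V →L[ℝ] ℝ :=
  LinearMap.toContinuousLinearMap
    ((LinearMap.toContinuousLinearMap : (V →ₗ[ℝ] ℝ) ≃ₗ[ℝ] (V →L[ℝ] ℝ)).toLinearMap ∘ₗ B)

lemma bc_apply (B : LinearMap.BilinForm ℝ V) (x y : V) : bc B x y = B x y := rfl

lemma wronskian_const (B : LinearMap.BilinForm ℝ V)
    (hsymm : ∀ x y, B x y = B y x) (hA : ∀ x y, B (A x) y = B x (A y))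
    {u v : ℝ → V} (hu : Sol A f u) (hv : Sol A f v) (s t : ℝ) :
    B (deriv u s) (v s) - B (deriv v s) (u s)
      = B (deriv u t) (v t) - B (deriv v t) (u t) := by
  set F : ℝ → ℝ := fun t => bc B (deriv u t) (v t) - bc B (deriv v t) (u t) with hF
  have key : ∀ r, HasDerivAt F 0 r := by
    intro r
    have hu1 : HasDerivAt (fun t => bc B (deriv u t)) (bc B (deriv (deriv u) r)) r :=
      (bc B).hasFDerivAt.comp_hasDerivAt r (((sol_diff hu).2 r).hasDerivAt)
    have hv1 : HasDerivAt (fun t => bc B (deriv v t)) (bc B (deriv (deriv v) r)) r :=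
      (bc B).hasFDerivAt.comp_hasDerivAt r (((sol_diff hv).2 r).hasDerivAt)
    have h2 : HasDerivAt (fun t => bc B (deriv u t) (v t))
        (bc B (deriv (deriv u) r) (v r) + bc B (deriv u r) (deriv v r)) r :=
      hu1.clm_apply (((sol_diff hv).1 r).hasDerivAt)
    have h3 : HasDerivAt (fun t => bc B (deriv v t) (u t))
        (bc B (deriv (deriv v) r) (u r) + bc B (deriv v r) (deriv u r)) r :=
      hv1.clm_apply (((sol_diff hu).1 r).hasDerivAt)
    have h4 := h2.sub h3
    have e : bc B (deriv (deriv u) r) (v r) + bc B (deriv u r) (deriv v r)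
        - (bc B (deriv (deriv v) r) (u r) + bc B (deriv v r) (deriv u r)) = 0 := by
      rw [hu.2 r, hv.2 r]
      simp only [map_add, map_smul, ContinuousLinearMap.add_apply, ContinuousLinearMap.smul_apply,
        bc_apply, smul_eq_mul]
      rw [hsymm (v r) (u r), hsymm (deriv v r) (deriv u r), hA (u r) (v r),
        hsymm (A (v r)) (u r)]
      ring
    rw [e] at h4
    exact h4
  have hd : Differentiable ℝ F := fun r => (key r).differentiableAt
  have hc := is_const_of_deriv_eq_zero hd (fun r => (key r).deriv) s t
  simpa [hF, bc_apply] using hc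

noncomputable def mulG (B : LinearMap.BilinForm ℝ V) (hfp : Function.Periodic f p) :
    G A f → G A f → G A f := fun g h =>
  (g.1 + h.1,
   g.2.1 + h.2.1 + (B (deriv h.2.2.1 0) (g.2.2.1 ((h.1 : ℝ) * p))
     - B (deriv g.2.2.1 ((h.1 : ℝ) * p)) (h.2.2.1 0)),
   ⟨fun t => h.2.2.1 t + g.2.2.1 (t + (h.1 : ℝ) * p),
    sol_add h.2.2.2 (sol_shift hfp g.2.2.2 h.1)⟩)

def oneG : G A f := (0, 0, ⟨fun _ => 0, sol_zero⟩)

noncomputable def invG (hfp : Function.Periodic f p) : G A f → G A f := fun g =>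
  (-g.1, -g.2.1, ⟨fun t => -(g.2.2.1 (t + ((-g.1 : ℤ) : ℝ) * p)),
    sol_neg (sol_shift hfp g.2.2.2 (-g.1))⟩)

noncomputable def act (B : LinearMap.BilinForm ℝ V) (p : ℝ) (g : G A f) (x : ℝ × ℝ × V) : ℝ × ℝ × V :=
  (x.1 + (g.1 : ℝ) * p,
   x.2.1 + g.2.1 - B (deriv g.2.2.1 x.1) ((2 : ℝ) • x.2.2 + g.2.2.1 x.1),
   x.2.2 + g.2.2.1 x.1)

lemma act_one (B : LinearMap.BilinForm ℝ V) (x : ℝ × ℝ × V) :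
    act B p (oneG : G A f) x = x := by
  simp [act, oneG, deriv_const']

lemma act_mul (B : LinearMap.BilinForm ℝ V)
    (hsymm : ∀ x y, B x y = B y x) (hA : ∀ x y, B (A x) y = B x (A y))
    (hfp : Function.Periodic f p) (g h : G A f) (x : ℝ × ℝ × V) :
    act B p (mulG B hfp g h) x = act B p g (act B p h x) := by
  obtain ⟨t, s, w⟩ := x
  set u := g.2.2.1 with hu
  set v := h.2.2.1 with hv
  set c := (h.1 : ℝ) * p with hc
  have hdu := sol_diff g.2.2.2
  have hdv := sol_diff h.2.2.2
  have hdsh : Differentiable ℝ (fun t => u (t + c)) :=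
    (sol_diff (sol_shift hfp g.2.2.2 h.1)).1
  have hd : deriv (fun r => v r + u (r + c)) t = deriv v t + deriv u (t + c) := by
    rw [deriv_fun_add (hdv.1 t) (hdsh t), deriv_shift]
  have hw := wronskian_const B hsymm hA (sol_shift hfp g.2.2.2 h.1) h.2.2.2 0 t
  rw [deriv_shift, deriv_shift, zero_add] at hw
  simp only [act, mulG, Prod.mk.injEq]
  refine ⟨by push_cast; ring, ?_, by abel⟩
  try dsimp only
  rw [hd]
  simp only [map_add, map_smul, LinearMap.add_apply, smul_eq_mul, smul_add]
  nlinarith [hw, hsymm (deriv v t) (u (t + c)), hsymm (deriv u (t + c)) (v t)]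

lemma act_faithful (B : LinearMap.BilinForm ℝ V) (hp : 0 < p) (g g' : G A f)
    (H : ∀ x, act B p g x = act B p g' x) : g = g' := by
  obtain ⟨k, q, u⟩ := g
  obtain ⟨k', q', u'⟩ := g'
  have h1 : k = k' := by
    have h := congrArg Prod.fst (H (0, 0, 0))
    simp only [act] at h
    have : (k : ℝ) = k' := mul_right_cancel₀ (ne_of_gt hp) (by linarith)
    exact_mod_cast this
  have h2 : u = u' := by
    refine Subtype.ext (funext fun t => ?_)
    have h := congrArg (fun y => y.2.2) (H (t, 0, 0))
    simpa [act] using h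
  subst h1; subst h2
  have h3 : q = q' := by
    have h := congrArg (fun y => y.2.1) (H (0, 0, 0))
    simp only [act] at h
    linarith
  rw [h3]

lemma act_inv (B : LinearMap.BilinForm ℝ V)
    (hfp : Function.Periodic f p) (g : G A f) (x : ℝ × ℝ × V) :
    act B p (invG hfp g) (act B p g x) = x := by
  obtain ⟨t, s, w⟩ := x
  obtain ⟨k, q, u⟩ := g
  have e0 : ∀ r : ℝ, r + (k : ℝ) * p + ((-k : ℤ) : ℝ) * p = r := by
    intro r; push_cast; ring
  have e1 : deriv (fun r => -(u.1 (r + ((-k : ℤ) : ℝ) * p))) (t + (k : ℝ) * p)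
      = -(deriv u.1 t) := by
    have : deriv (fun r => -(u.1 (r + ((-k : ℤ) : ℝ) * p))) (t + (k : ℝ) * p)
        = -(deriv (fun r => u.1 (r + ((-k : ℤ) : ℝ) * p)) (t + (k : ℝ) * p)) := deriv.neg
    rw [this, deriv_shift, e0]
  simp only [act, invG, Prod.mk.injEq]
  refine ⟨by push_cast; ring, ?_, ?_⟩
  · try dsimp only
    rw [e1, e0]
    simp only [map_neg, LinearMap.neg_apply, map_add, map_smul, smul_eq_mul, smul_add]
    ring
  · try dsimp only
    rw [e0]
    abel

variable (B : LinearMap.BilinForm ℝ V)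

lemma mulG_assoc (hsymm : ∀ x y, B x y = B y x) (hA : ∀ x y, B (A x) y = B x (A y))
    (hp : 0 < p) (hfp : Function.Periodic f p) (a b c : G A f) :
    mulG B hfp (mulG B hfp a b) c = mulG B hfp a (mulG B hfp b c) :=
  act_faithful B hp _ _ fun x => by
    rw [act_mul B hsymm hA hfp, act_mul B hsymm hA hfp, act_mul B hsymm hA hfp,
      act_mul B hsymm hA hfp]

lemma mulG_one_left (hsymm : ∀ x y, B x y = B y x) (hA : ∀ x y, B (A x) y = B x (A y))
    (hp : 0 < p) (hfp : Function.Periodic f p) (a : G A f) :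
    mulG B hfp oneG a = a :=
  act_faithful B hp _ _ fun x => by
    rw [act_mul B hsymm hA hfp, act_one]

lemma mulG_one_right (hsymm : ∀ x y, B x y = B y x) (hA : ∀ x y, B (A x) y = B x (A y))
    (hp : 0 < p) (hfp : Function.Periodic f p) (a : G A f) :
    mulG B hfp a oneG = a :=
  act_faithful B hp _ _ fun x => by
    rw [act_mul B hsymm hA hfp, act_one]

lemma mulG_inv_left (hsymm : ∀ x y, B x y = B y x) (hA : ∀ x y, B (A x) y = B x (A y))
    (hp : 0 < p) (hfp : Function.Periodic f p) (a : G A f) :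
    mulG B hfp (invG hfp a) a = oneG :=
  act_faithful B hp _ _ fun x => by
    rw [act_mul B hsymm hA hfp, act_inv, act_one]

end Stmt11

/-- With `𝓔` the space of smooth solutions `u : ℝ → V` of
`ü = f u + A u` (`f` smooth `p`-periodic, `A` self-adjoint for a pseudo-Euclidean
inner product `⟪·,·⟫` on `V`), the formula
`(k,q,u)·(t,s,v) = (t + kp, s + q - ⟪u̇(t), 2v + u(t)⟫, v + u(t))`
defines a left action of a group structure on `G = ℤ × ℝ × 𝓔` on `ℝ² × V`. -/
theorem stmt_11 (V : Type) [NormedAddCommGroup V] [NormedSpace ℝ V]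
    [FiniteDimensional ℝ V]
    (B : LinearMap.BilinForm ℝ V) (hsymm : ∀ x y, B x y = B y x)
    (hnd : ∀ x, (∀ y, B x y = 0) → x = 0)
    (A : V →ₗ[ℝ] V) (hA : ∀ x y, B (A x) y = B x (A y))
    (f : ℝ → ℝ) (hf : ContDiff ℝ (⊤ : ℕ∞) f) (p : ℝ) (hp : 0 < p)
    (hfp : Function.Periodic f p) :
    ∃ (mul : (ℤ × ℝ × {u : ℝ → V // ContDiff ℝ (⊤ : ℕ∞) u ∧
          ∀ t, deriv (deriv u) t = f t • u t + A (u t)}) →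
        (ℤ × ℝ × {u : ℝ → V // ContDiff ℝ (⊤ : ℕ∞) u ∧
          ∀ t, deriv (deriv u) t = f t • u t + A (u t)}) →
        (ℤ × ℝ × {u : ℝ → V // ContDiff ℝ (⊤ : ℕ∞) u ∧
          ∀ t, deriv (deriv u) t = f t • u t + A (u t)}))
      (one : ℤ × ℝ × {u : ℝ → V // ContDiff ℝ (⊤ : ℕ∞) u ∧
          ∀ t, deriv (deriv u) t = f t • u t + A (u t)})
      (inv : (ℤ × ℝ × {u : ℝ → V // ContDiff ℝ (⊤ : ℕ∞) u ∧
          ∀ t, deriv (deriv u) t = f t • u t + A (u t)}) →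
        (ℤ × ℝ × {u : ℝ → V // ContDiff ℝ (⊤ : ℕ∞) u ∧
          ∀ t, deriv (deriv u) t = f t • u t + A (u t)})),
      (∀ a b c, mul (mul a b) c = mul a (mul b c)) ∧
      (∀ a, mul one a = a) ∧ (∀ a, mul a one = a) ∧
      (∀ a, mul (inv a) a = one) ∧
      (∀ g x : ℝ × ℝ × V,
        (fun (g : ℤ × ℝ × {u : ℝ → V // ContDiff ℝ (⊤ : ℕ∞) u ∧
              ∀ t, deriv (deriv u) t = f t • u t + A (u t)}) (x : ℝ × ℝ × V) =>
            (x.1 + (g.1 : ℝ) * p,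
             x.2.1 + g.2.1 - B (deriv g.2.2.1 x.1) ((2 : ℝ) • x.2.2 + g.2.2.1 x.1),
             x.2.2 + g.2.2.1 x.1)) one x = x) ∧
      (∀ g h x,
        (fun (g : ℤ × ℝ × {u : ℝ → V // ContDiff ℝ (⊤ : ℕ∞) u ∧
              ∀ t, deriv (deriv u) t = f t • u t + A (u t)}) (x : ℝ × ℝ × V) =>
            (x.1 + (g.1 : ℝ) * p,
             x.2.1 + g.2.1 - B (deriv g.2.2.1 x.1) ((2 : ℝ) • x.2.2 + g.2.2.1 x.1),
             x.2.2 + g.2.2.1 x.1)) (mul g h) x =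
        (fun (g : ℤ × ℝ × {u : ℝ → V // ContDiff ℝ (⊤ : ℕ∞) u ∧
              ∀ t, deriv (deriv u) t = f t • u t + A (u t)}) (x : ℝ × ℝ × V) =>
            (x.1 + (g.1 : ℝ) * p,
             x.2.1 + g.2.1 - B (deriv g.2.2.1 x.1) ((2 : ℝ) • x.2.2 + g.2.2.1 x.1),
             x.2.2 + g.2.2.1 x.1)) g
          ((fun (g : ℤ × ℝ × {u : ℝ → V // ContDiff ℝ (⊤ : ℕ∞) u ∧
              ∀ t, deriv (deriv u) t = f t • u t + A (u t)}) (x : ℝ × ℝ × V) =>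
            (x.1 + (g.1 : ℝ) * p,
             x.2.1 + g.2.1 - B (deriv g.2.2.1 x.1) ((2 : ℝ) • x.2.2 + g.2.2.1 x.1),
             x.2.2 + g.2.2.1 x.1)) h x)) := by
    exact ⟨Stmt11.mulG B hfp, Stmt11.oneG, Stmt11.invG hfp,
    Stmt11.mulG_assoc B hsymm hA hp hfp,
    Stmt11.mulG_one_left B hsymm hA hp hfp,
    Stmt11.mulG_one_right B hsymm hA hp hfp,
    Stmt11.mulG_inv_left B hsymm hA hp hfp,
    fun _ x => Stmt11.act_one B x,
    fun g h x => Stmt11.act_mul B hsymm hA hfp g h x⟩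
end
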